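/- arXiv:1101.2970 — 3 statements merged into one kernel-verified Lean document; each statement's English description precedes it below -/
import Mathlib

section
/- Let n ≥ 3 be an integer and let l_1, …, l_n ∈ ℕ ∪ {∞} satisfy l_i ≥ 3 for every i. If the curvature κ = 1 − n/2 + Σ_{i=1}^n 1/l_i (computed in ℝ with 1/∞ = 0) is strictly negative, then κ ≤ −1/1806. -/
/-!
Every term `1/lᵢ` lies in `{0} ∪ {1/m : m ≥ 3}`, and this set is discrete away from `0`:
if `1/l < 1/k` then already `1/l ≤ 1/(k+1)`. For `n ≥ 7` the crude bound `1/lᵢ ≤ 1/3` gives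
`κ ≤ 1 - n/6 ≤ -1/6`. For `3 ≤ n ≤ 6` we sort the terms: either the larger ones are small
enough for the crude bound, or they take one of finitely many values, and then discreteness
pushes the smallest term strictly below the room they leave. The extremal configuration is
`(3, 7, 43)`, with `1/2 - 1/3 - 1/7 - 1/43 = 1/1806`.
-/

/-- The reciprocal of an extended natural number, as a real number,
with the convention `1/∞ = 0`. -/
noncomputable def einv : ℕ∞ → ℝ
  | ⊤ => 0
  | (m : ℕ) => (m : ℝ)⁻¹

@[simp]
theorem einv_top : einv ⊤ = 0 := rfl

@[simp]
theorem einv_coe (m : ℕ) : einv m = (m : ℝ)⁻¹ := rfl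

def IsInvDegree (x : ℝ) : Prop := ∃ l : ℕ∞, 3 ≤ l ∧ einv l = x

namespace IsInvDegree

theorem nonneg {x : ℝ} (hx : IsInvDegree x) : 0 ≤ x := by
  obtain ⟨l, -, rfl⟩ := hx
  cases l with
  | top => simp
  | coe m => simp

theorem le_third {x : ℝ} (hx : IsInvDegree x) : x ≤ 3⁻¹ := by
  obtain ⟨l, hl, rfl⟩ := hx
  cases l with
  | top => norm_num
  | coe m => exact inv_anti₀ (by norm_num) (by exact_mod_cast hl)

theorem le_inv_of_lt {x : ℝ} (hx : IsInvDegree x) (k : ℕ) (h : x < (k : ℝ)⁻¹) :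
    x ≤ ((k + 1 : ℕ) : ℝ)⁻¹ := by
  obtain ⟨l, hl, rfl⟩ := hx
  cases l with
  | top => simp only [einv_top]; positivity
  | coe m =>
    have hm : (0 : ℝ) < m := by linarith [show (3 : ℝ) ≤ m by exact_mod_cast hl]
    have hk : (0 : ℝ) < k := inv_pos.1 ((inv_pos.2 hm).trans h)
    have hkm : k < m := by exact_mod_cast (inv_lt_inv₀ hm hk).1 h
    exact inv_anti₀ (by positivity) (by exact_mod_cast hkm)

theorem eq_or_le_of_le {x : ℝ} (hx : IsInvDegree x) (k : ℕ) (h : x ≤ (k : ℝ)⁻¹) :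
    x = (k : ℝ)⁻¹ ∨ x ≤ ((k + 1 : ℕ) : ℝ)⁻¹ :=
  h.eq_or_lt.imp_right (hx.le_inv_of_lt k)

theorem add_le_of_add_lt_sixth {b c : ℝ}
    (hb : IsInvDegree b) (hc : IsInvDegree c) (hcb : c ≤ b) (h : b + c < 6⁻¹) :
    b + c ≤ 6⁻¹ - 1806⁻¹ := by
  have hc0 := hc.nonneg
  rcases hb.eq_or_le_of_le 7 (hb.le_inv_of_lt 6 (by linarith)) with rfl | hb8
  · linarith [hc.le_inv_of_lt 42 (by linarith)]
  rcases hb.eq_or_le_of_le 8 hb8 with rfl | hb9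
  · linarith [hc.le_inv_of_lt 24 (by linarith)]
  rcases hb.eq_or_le_of_le 9 hb9 with rfl | hb10
  · linarith [hc.le_inv_of_lt 18 (by linarith)]
  rcases hb.eq_or_le_of_le 10 hb10 with rfl | hb11
  · linarith [hc.le_inv_of_lt 15 (by linarith)]
  rcases hb.eq_or_le_of_le 11 hb11 with rfl | hb12
  · linarith [hc.le_inv_of_lt 13 (by linarith)]
  rcases hb.eq_or_le_of_le 12 hb12 with rfl | hb13
  · linarith [hc.le_inv_of_lt 12 (by linarith)]
  · linarith

theorem add_le_of_add_lt_quarter {b c : ℝ}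
    (hb : IsInvDegree b) (hc : IsInvDegree c) (hcb : c ≤ b) (h : b + c < 4⁻¹) :
    b + c ≤ 4⁻¹ - 420⁻¹ := by
  have hc0 := hc.nonneg
  rcases hb.eq_or_le_of_le 5 (hb.le_inv_of_lt 4 (by linarith)) with rfl | hb6
  · linarith [hc.le_inv_of_lt 20 (by linarith)]
  rcases hb.eq_or_le_of_le 6 hb6 with rfl | hb7
  · linarith [hc.le_inv_of_lt 12 (by linarith)]
  rcases hb.eq_or_le_of_le 7 hb7 with rfl | hb8
  · linarith [hc.le_inv_of_lt 9 (by linarith)]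
  rcases hb.eq_or_le_of_le 8 hb8 with rfl | hb9
  · linarith [hc.le_inv_of_lt 8 (by linarith)]
  · linarith

theorem sum_fin_three_le {x : Fin 3 → ℝ} (hx : ∀ i, IsInvDegree (x i)) (hmono : Monotone x)
    (h : ∑ i, x i < 2⁻¹) : ∑ i, x i ≤ 2⁻¹ - 1806⁻¹ := by
  rw [Fin.sum_univ_three] at h ⊢
  have h01 : x 0 ≤ x 1 := hmono (by decide)
  have h12 : x 1 ≤ x 2 := hmono (by decide)
  have h0 := (hx 0).nonneg
  rcases (hx 2).eq_or_le_of_le 3 (hx 2).le_third with h2 | h2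
  · linarith [add_le_of_add_lt_sixth (hx 1) (hx 0) h01 (by linarith)]
  rcases (hx 2).eq_or_le_of_le 4 h2 with h2 | h2
  · linarith [add_le_of_add_lt_quarter (hx 1) (hx 0) h01 (by linarith)]
  rcases (hx 2).eq_or_le_of_le 5 h2 with h2 | h2
  · rcases (hx 1).eq_or_le_of_le 5 (by linarith) with h1 | h1
    · linarith [(hx 0).le_inv_of_lt 10 (by linarith)]
    rcases (hx 1).eq_or_le_of_le 6 h1 with h1 | h1
    · linarith [(hx 0).le_inv_of_lt 7 (by linarith)]
    · linarith
  rcases (hx 2).eq_or_le_of_le 6 h2 with h2 | h2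
  · rcases (hx 1).eq_or_le_of_le 6 (by linarith) with h1 | h1
    · linarith [(hx 0).le_inv_of_lt 6 (by linarith)]
    · linarith
  · linarith

theorem sum_fin_four_le {x : Fin 4 → ℝ} (hx : ∀ i, IsInvDegree (x i)) (hmono : Monotone x)
    (h : ∑ i, x i < 1) : ∑ i, x i ≤ 1 - 156⁻¹ := by
  rw [Fin.sum_univ_four] at h ⊢
  have h01 : x 0 ≤ x 1 := hmono (by decide)
  have h12 : x 1 ≤ x 2 := hmono (by decide)
  have h23 : x 2 ≤ x 3 := hmono (by decide)
  have h0 := (hx 0).nonneg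
  rcases (hx 3).eq_or_le_of_le 3 (hx 3).le_third with h3 | h3
  · rcases (hx 2).eq_or_le_of_le 3 (hx 2).le_third with h2 | h2
    · rcases (hx 1).eq_or_le_of_le 4 ((hx 1).le_inv_of_lt 3 (by linarith)) with h1 | h1
      · linarith [(hx 0).le_inv_of_lt 12 (by linarith)]
      rcases (hx 1).eq_or_le_of_le 5 h1 with h1 | h1
      · linarith [(hx 0).le_inv_of_lt 7 (by linarith)]
      rcases (hx 1).eq_or_le_of_le 6 h1 with h1 | h1
      · linarith [(hx 0).le_inv_of_lt 6 (by linarith)]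
      · linarith
    rcases (hx 2).eq_or_le_of_le 4 h2 with h2 | h2
    · rcases (hx 1).eq_or_le_of_le 4 (by linarith) with h1 | h1
      · linarith [(hx 0).le_inv_of_lt 6 (by linarith)]
      · linarith
    · linarith
  · linarith [(hx 0).le_inv_of_lt 4 (by linarith)]

theorem sum_fin_five_le {x : Fin 5 → ℝ} (hx : ∀ i, IsInvDegree (x i)) (hmono : Monotone x)
    (h : ∑ i, x i < 3 / 2) : ∑ i, x i ≤ 3 / 2 - 42⁻¹ := by
  rw [Fin.sum_univ_five] at h ⊢
  have h01 : x 0 ≤ x 1 := hmono (by decide)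
  have h12 : x 1 ≤ x 2 := hmono (by decide)
  have h23 : x 2 ≤ x 3 := hmono (by decide)
  have h34 : x 3 ≤ x 4 := hmono (by decide)
  have h2 := (hx 2).le_third
  have h3 := (hx 3).le_third
  have h4 := (hx 4).le_third
  rcases (hx 1).eq_or_le_of_le 3 (hx 1).le_third with h1 | h1
  · linarith [(hx 0).le_inv_of_lt 6 (by linarith)]
  rcases (hx 2).eq_or_le_of_le 3 h2 with h2 | h2
  · rcases (hx 1).eq_or_le_of_le 4 h1 with h1 | h1
    · linarith [(hx 0).le_inv_of_lt 4 (by linarith)]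
    · linarith
  · linarith

theorem sum_fin_six_le {x : Fin 6 → ℝ} (hx : ∀ i, IsInvDegree (x i)) (hmono : Monotone x)
    (h : ∑ i, x i < 2) : ∑ i, x i ≤ 2 - 12⁻¹ := by
  rw [Fin.sum_univ_six] at h ⊢
  have h01 : x 0 ≤ x 1 := hmono (by decide)
  have h12 : x 1 ≤ x 2 := hmono (by decide)
  have h23 : x 2 ≤ x 3 := hmono (by decide)
  have h34 : x 3 ≤ x 4 := hmono (by decide)
  have h45 : x 4 ≤ x 5 := hmono (by decide)
  have h5 := (hx 5).le_third
  rcases (hx 0).eq_or_le_of_le 3 (hx 0).le_third with h0 | h0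
  · linarith
  · linarith [(hx 1).le_third, (hx 2).le_third, (hx 3).le_third, (hx 4).le_third]

theorem sum_le_card_div_three {n : ℕ} {x : Fin n → ℝ} (hx : ∀ i, IsInvDegree (x i)) :
    ∑ i, x i ≤ n / 3 := by
  calc ∑ i, x i ≤ ∑ _i : Fin n, (3⁻¹ : ℝ) := Finset.sum_le_sum fun i _ => (hx i).le_third
    _ = n / 3 := by simp [div_eq_mul_inv]

end IsInvDegree

/-- If `n ≥ 3` and `l₁, …, lₙ ∈ ℕ ∪ {∞}` all satisfy `lᵢ ≥ 3` and the curvature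
`κ = 1 − n/2 + Σᵢ 1/lᵢ` (with `1/∞ = 0`) is strictly negative,
then `κ ≤ −1/1806`. -/
theorem stmt_0 (n : ℕ) (hn : 3 ≤ n) (l : Fin n → ℕ∞) (hl : ∀ i, 3 ≤ l i)
    (hneg : 1 - (n : ℝ) / 2 + ∑ i, einv (l i) < 0) :
    1 - (n : ℝ) / 2 + ∑ i, einv (l i) ≤ -1 / 1806 := by
  obtain ⟨x, hx, hmono, hsum⟩ : ∃ x : Fin n → ℝ,
      (∀ i, IsInvDegree (x i)) ∧ Monotone x ∧ ∑ i, x i = ∑ i, einv (l i) :=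
    ⟨_, fun i => ⟨_, hl _, rfl⟩, Tuple.monotone_sort (einv ∘ l),
      Equiv.sum_comp _ (einv ∘ l)⟩
  rw [← hsum] at hneg ⊢
  rcases le_or_gt 7 n with h7 | h7
  · have h7' : (7 : ℝ) ≤ n := by exact_mod_cast h7
    linarith [IsInvDegree.sum_le_card_div_three hx]
  interval_cases n
  · linarith [IsInvDegree.sum_fin_three_le hx hmono (by linarith)]
  · linarith [IsInvDegree.sum_fin_four_le hx hmono (by linarith)]
  · linarith [IsInvDegree.sum_fin_five_le hx hmono (by linarith)]
  · linarith [IsInvDegree.sum_fin_six_le hx hmono (by linarith)]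
end

section
/- Let T be a locally finite tree (a connected simple graph with no cycles, all of whose vertex degrees are finite) in which every vertex has degree at least 2, and let a : V → V → ℂ satisfy, for all distinct vertices v, w: a(v,w) ≠ 0 if v and w are adjacent, and a(v,w) = 0 if v and w are not adjacent (the diagonal values a(v,v) are arbitrary). Then for every λ ∈ ℂ, the only finitely supported function φ : V → ℂ satisfying a(v,v)φ(v) + Σ_{w adjacent to v} a(v,w) φ(w) = λ φ(v) for all v ∈ V is φ ≡ 0. -/
/-!
Fix `u` in the support of `φ` and let `v` be a vertex of the support farthest from `u`. Since
`deg v ≥ 2` and in a tree only one neighbour of a vertex is closer to `u` (and none is equally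
far), `v` has a neighbour `w` farther from `u`. Then `φ w = 0`, and `v` is the only neighbour of
`w` in the support, so the eigenvalue equation at `w` reads `a(w,v) φ(v) = 0`, which is absurd.
-/

open SimpleGraph

namespace SimpleGraph

variable {V : Type*} {G : SimpleGraph V}

theorem IsTree.eq_of_adj_of_dist_lt (hG : G.IsTree) {u t x₁ x₂ : V}
    (h₁ : G.Adj x₁ t) (h₂ : G.Adj x₂ t)
    (hd₁ : G.dist u x₁ < G.dist u t) (hd₂ : G.dist u x₂ < G.dist u t) : x₁ = x₂ := by
  -- Both `xᵢ` are the penultimate vertex of the unique path from `u` to `t`.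
  have concat_isPath : ∀ {x} (hx : G.Adj x t), G.dist u x < G.dist u t →
      ∃ q : G.Walk u x, (q.concat hx).IsPath := by
    intro x hx hd
    obtain ⟨q, hq⟩ := (hG.connected u x).exists_walk_length_eq_dist
    refine ⟨q, (q.concat hx).isPath_of_length_eq_dist ?_⟩
    have := hG.dist_eq_dist_add_one_of_adj u hx
    rw [Walk.length_concat, hq]
    omega
  obtain ⟨q₁, hq₁⟩ := concat_isPath h₁ hd₁
  obtain ⟨q₂, hq₂⟩ := concat_isPath h₂ hd₂
  have hq : q₁.concat h₁ = q₂.concat h₂ :=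
    congrArg Subtype.val <| (hG.isAcyclic.subsingleton_path u t).elim ⟨_, hq₁⟩ ⟨_, hq₂⟩
  simpa only [Walk.penultimate_concat] using congrArg Walk.penultimate hq

theorem IsTree.exists_adj_dist_lt (hG : G.IsTree) (u : V) {v : V} [Fintype (G.neighborSet v)]
    (hv : 2 ≤ G.degree v) : ∃ w, G.Adj v w ∧ G.dist u v < G.dist u w := by
  rw [← card_neighborFinset_eq_degree] at hv
  obtain ⟨w₁, hw₁, w₂, hw₂, hne⟩ := Finset.one_lt_card.mp hv
  rw [mem_neighborFinset] at hw₁ hw₂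
  by_contra! hfar
  have hclose : ∀ w, G.Adj v w → G.dist u w < G.dist u v := fun w hw ↦
    (hfar w hw).lt_of_ne (hG.dist_ne_of_adj u hw).symm
  exact hne <| hG.eq_of_adj_of_dist_lt hw₁.symm hw₂.symm (hclose w₁ hw₁) (hclose w₂ hw₂)

end SimpleGraph

theorem stmt_6_general {V : Type*} (G : SimpleGraph V) [∀ v, Fintype (G.neighborSet v)]
    (hT : G.IsTree) (hdeg : ∀ v, 2 ≤ G.degree v)
    (a : V → V → ℂ)
    (ha1 : ∀ v w, G.Adj v w → a v w ≠ 0)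
    (lam : ℂ) (φ : V → ℂ) (hφ : (Function.support φ).Finite)
    (heig : ∀ v, a v v * φ v + ∑ w ∈ G.neighborFinset v, a v w * φ w = lam * φ v) :
    φ = 0 := by
  by_contra hφ0
  obtain ⟨u, hu⟩ := Function.support_nonempty_iff.mpr hφ0
  obtain ⟨v, hv, hvmax⟩ := Set.exists_max_image _ (G.dist u) hφ ⟨u, hu⟩
  obtain ⟨w, hvw, hvw_dist⟩ := hT.exists_adj_dist_lt u (hdeg v)
  have hw : φ w = 0 := by
    by_contra hw
    exact (hvmax w hw).not_gt hvw_dist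
  have hsum : ∑ x ∈ G.neighborFinset w, a w x * φ x = a w v * φ v := by
    refine Finset.sum_eq_single_of_mem v ((mem_neighborFinset G w v).mpr hvw.symm) ?_
    intro x hx hxv
    by_contra hφx
    have hwx : G.Adj x w := ((mem_neighborFinset G w x).mp hx).symm
    exact hxv <| hT.eq_of_adj_of_dist_lt hwx hvw
      ((hvmax x (right_ne_zero_of_mul hφx)).trans_lt hvw_dist) hvw_dist
  have heig_w := heig w
  rw [hw, mul_zero, mul_zero, zero_add, hsum] at heig_w
  exact mul_ne_zero (ha1 w v hvw.symm) hv heig_w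

/-- A nearest neighbor operator on a locally finite tree all of whose vertex degrees
are at least `2` admits no nonzero finitely supported eigenfunction. -/
theorem stmt_6 {V : Type*} (G : SimpleGraph V) [∀ v, Fintype (G.neighborSet v)]
    (hT : G.IsTree) (hdeg : ∀ v, 2 ≤ G.degree v)
    (a : V → V → ℂ)
    (ha1 : ∀ v w, G.Adj v w → a v w ≠ 0)
    (ha2 : ∀ v w, v ≠ w → ¬ G.Adj v w → a v w = 0)
    (lam : ℂ) (φ : V → ℂ) (hφ : (Function.support φ).Finite)
    (heig : ∀ v, a v v * φ v + ∑ w ∈ G.neighborFinset v, a v w * φ w = lam * φ v) :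
    φ = 0 :=
  stmt_6_general G hT hdeg a ha1 lam φ hφ heig
end

section
/- Let T be a locally finite tree such that the vertex degrees tend to infinity, i.e., for every m ∈ ℕ there is a finite set K_m of vertices with deg(v) ≥ m for all v ∉ K_m. Then for every ε > 0 there is a finite set K of vertices such that every finite nonempty vertex set W ⊆ V \ K satisfies |∂_E W| ≥ (1 − ε)·vol(W) and |∂_E W| ≥ (1/ε)·|W|. In other words, the Cheeger constant at infinity satisfies α_{∂V} = 1 and β_{∂V} = ∞. -/
/-!
Let `W` be a finite set of vertices. Each of the `vol(W)` darts leaving a vertex of `W` either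
crosses the boundary or is one of the two orientations of an edge of the induced subgraph on `W`.
That subgraph is a forest, so it has fewer than `|W|` edges, whence `|∂_E W| ≥ vol(W) - 2|W|`.
Away from a finite set every degree is at least `M`, so `vol(W) ≥ M|W|`, and for `M` large in
terms of `ε` the term `2|W|` is negligible against both `vol(W)` and `|∂_E W|`.
-/

/-- The edge boundary of a vertex set `W`: the set of edges of `G` with exactly one
endpoint in `W`. -/
def edgeBoundary {V : Type*} (G : SimpleGraph V) (W : Set V) : Set (Sym2 V) :=
  {e | e ∈ G.edgeSet ∧ ∃ v w : V, e = s(v, w) ∧ v ∈ W ∧ w ∉ W}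

open Finset

namespace SimpleGraph

variable {V : Type*} {G : SimpleGraph V}

lemma IsAcyclic.card_edgeSet_lt [Finite V] [Nonempty V] (hG : G.IsAcyclic) :
    Nat.card G.edgeSet < Nat.card V := by
  obtain ⟨T, hGT, -, hT⟩ := connected_top.exists_isTree_le_of_le_of_isAcyclic le_top hG
  have hcard := (isTree_iff_connected_and_card.mp hT).2
  have hmono : Nat.card G.edgeSet ≤ Nat.card T.edgeSet :=
    Nat.card_mono (Set.toFinite _) (edgeSet_mono hGT)
  omega

lemma IsAcyclic.card_edgeSet_induce_le (hG : G.IsAcyclic) (W : Finset V) :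
    Nat.card (G.induce (W : Set V)).edgeSet ≤ #W := by
  rcases W.eq_empty_or_nonempty with rfl | hW
  · simp
  · have : Nonempty (W : Set V) := hW.to_subtype
    exact (hG.induce _).card_edgeSet_lt.le.trans_eq (by simp)

variable (G) [∀ v, Fintype (G.neighborSet v)] [DecidableEq V]

lemma ncard_edgeBoundary (W : Finset V) :
    (edgeBoundary G W).ncard = ∑ v ∈ W, #{w ∈ G.neighborFinset v | w ∉ W} := by
  set S := W.sigma fun v => {w ∈ G.neighborFinset v | w ∉ W}
  have hS : edgeBoundary G W = S.image fun p => s(p.1, p.2) := by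
    ext e
    simp only [edgeBoundary, S, coe_image, Set.mem_ofPred_eq, Set.mem_image, mem_coe, mem_sigma,
      mem_filter, mem_neighborFinset]
    constructor
    · rintro ⟨he, v, w, rfl, hv, hw⟩
      exact ⟨⟨v, w⟩, ⟨hv, he, hw⟩, rfl⟩
    · rintro ⟨⟨v, w⟩, ⟨hv, hvw, hw⟩, rfl⟩
      exact ⟨hvw, v, w, rfl, hv, hw⟩
  have hinj : Set.InjOn (fun p : Σ _ : V, V => s(p.1, p.2)) S := by
    rintro ⟨v, w⟩ hvw ⟨v', w'⟩ hvw' h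
    simp only [S, mem_coe, mem_sigma, mem_filter, Sym2.eq_iff] at hvw hvw' h
    rcases h with ⟨rfl, rfl⟩ | ⟨rfl, rfl⟩
    · rfl
    · exact absurd hvw.1 hvw'.2.2
  rw [hS, Set.ncard_coe_finset, card_image_of_injOn hinj, card_sigma]

lemma degree_induce_eq_card_filter (W : Finset V) (v : (W : Set V))
    [Fintype ((G.induce (W : Set V)).neighborSet v)] :
    (G.induce (W : Set V)).degree v = #{w ∈ G.neighborFinset v | w ∈ W} := by
  rw [← card_neighborFinset_eq_degree, ← card_map (.subtype _)]
  congr 1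
  ext
  simp

lemma sum_card_filter_mem_eq_two_mul_card_edgeSet_induce (W : Finset V) :
    ∑ v ∈ W, #{w ∈ G.neighborFinset v | w ∈ W} =
      2 * Nat.card (G.induce (W : Set V)).edgeSet := by
  classical
  rw [← sum_coe_sort, Nat.card_eq_fintype_card, ← edgeFinset_card,
    ← sum_degrees_eq_twice_card_edges]
  exact Fintype.sum_congr _ _ fun v => (degree_induce_eq_card_filter G W v).symm

lemma sum_degree_eq_two_mul_card_edgeSet_induce_add_ncard_edgeBoundary (W : Finset V) :
    ∑ v ∈ W, G.degree v =
      2 * Nat.card (G.induce (W : Set V)).edgeSet + (edgeBoundary G W).ncard := by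
  rw [← sum_card_filter_mem_eq_two_mul_card_edgeSet_induce, ncard_edgeBoundary,
    ← sum_add_distrib]
  exact sum_congr rfl fun v _ => by
    rw [← card_neighborFinset_eq_degree, card_filter_add_card_filter_not]

variable {G}

theorem IsAcyclic.sum_degree_le_ncard_edgeBoundary_add (hG : G.IsAcyclic) (W : Finset V) :
    ∑ v ∈ W, G.degree v ≤ (edgeBoundary G W).ncard + 2 * #W := by
  rw [sum_degree_eq_two_mul_card_edgeSet_induce_add_ncard_edgeBoundary]
  have := hG.card_edgeSet_induce_le W
  omega

end SimpleGraph

/-- In a locally finite tree whose vertex degrees tend to infinity, for every `ε > 0`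
there is a finite vertex set `K` such that every finite nonempty vertex set `W`
avoiding `K` satisfies `|∂_E W| ≥ (1 − ε)·vol(W)` and `|∂_E W| ≥ (1/ε)·|W|`;
i.e. the Cheeger constants at infinity satisfy `α_{∂V} = 1` and `β_{∂V} = ∞`. -/
theorem stmt_9 {V : Type*} (G : SimpleGraph V) [∀ v, Fintype (G.neighborSet v)]
    (hT : G.IsTree)
    (hdeg : ∀ m : ℕ, ∃ K : Finset V, ∀ v ∉ K, m ≤ G.degree v) :
    ∀ ε : ℝ, 0 < ε → ∃ K : Finset V, ∀ W : Finset V, W.Nonempty → (∀ v ∈ W, v ∉ K) →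
      (1 - ε) * (∑ v ∈ W, (G.degree v : ℝ)) ≤ ((edgeBoundary G ↑W).ncard : ℝ) ∧
      (1 / ε) * W.card ≤ ((edgeBoundary G ↑W).ncard : ℝ) := by
  classical
  intro ε hε
  set M : ℕ := ⌈2 / ε + 2⌉₊
  obtain ⟨K, hK⟩ := hdeg M
  refine ⟨K, fun W _ hWK => ?_⟩
  set vol : ℝ := ∑ v ∈ W, (G.degree v : ℝ)
  set n : ℝ := (W.card : ℝ)
  have hvol : M * n ≤ vol := by
    have := card_nsmul_le_sum W (fun v => (G.degree v : ℝ)) M fun v hv => by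
      exact_mod_cast hK v (hWK v hv)
    rwa [nsmul_eq_mul, mul_comm] at this
  have hbd : vol - 2 * n ≤ (edgeBoundary G W).ncard := by
    have := Nat.cast_le (α := ℝ).mpr (hT.isAcyclic.sum_degree_le_ncard_edgeBoundary_add W)
    push_cast at this
    linarith
  have hM : 2 / ε + 2 ≤ M := Nat.le_ceil _
  have hn : 0 ≤ n := Nat.cast_nonneg _
  constructor
  · have hεM : 2 ≤ ε * M := by
      have := mul_le_mul_of_nonneg_left hM hε.le
      rw [mul_add, mul_div_cancel₀ _ hε.ne'] at this
      linarith
    linarith [mul_le_mul_of_nonneg_left hvol hε.le, mul_le_mul_of_nonneg_right hεM hn]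
  · have h1ε : 1 / ε ≤ M - 2 := by
      have : 0 < 1 / ε := by positivity
      rw [div_eq_mul_one_div 2] at hM
      linarith
    linarith [mul_le_mul_of_nonneg_right h1ε hn]
end
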